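/- Let α and β be standard Borel measurable spaces, let ρ and σ be probability measures on α, let η and κ be Markov kernels from α to β, and assume klDiv(ρ ⊗ₘ κ, σ ⊗ₘ η) < ∞. If it is not the case that κ x = η x for ρ-almost every x, then klDiv(ρ ⊗ₘ η, σ ⊗ₘ η) < klDiv(ρ ⊗ₘ κ, σ ⊗ₘ η), with strict inequality. (Strict propriety in Proposition 4.1: any imputation whose conditional distribution differs from the true one on a set of positive probability of observed values is scored strictly worse than the true-data imputation by the DR I-Score.) -/

import Mathlib

open MeasureTheory ProbabilityTheory Real
open scoped ENNReal NNReal ProbabilityTheory Classical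

/-- Kullback–Leibler divergence of `μ` with respect to `ν`: `∫ log (dμ/dν) dμ` if `μ ≪ ν` and
the log-likelihood ratio is integrable, and `∞` otherwise. -/
noncomputable def klDiv {α : Type*} [MeasurableSpace α] (μ ν : Measure α) : ℝ≥0∞ :=
  if μ ≪ ν ∧ Integrable (llr μ ν) μ then ENNReal.ofReal (∫ x, llr μ ν x ∂μ) else ∞

/-!
By the chain rule, `KL(ρ ⊗ₘ κ ‖ σ ⊗ₘ η) = KL(ρ ‖ σ) + KL(ρ ⊗ₘ κ ‖ ρ ⊗ₘ η)`, while
`KL(ρ ⊗ₘ η ‖ σ ⊗ₘ η) = KL(ρ ‖ σ)`. The first summand is finite, and the second is nonzero by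
Gibbs' inequality because `ρ ⊗ₘ κ ≠ ρ ⊗ₘ η` when `κ` and `η` differ on a set of positive
`ρ`-measure.
-/

/- Mathlib's `InformationTheory.klDiv` adds the correction `ν.real univ - μ.real univ` to the
integral, which vanishes for measures of equal mass. -/
lemma klDiv_eq_informationTheory_klDiv {α : Type*} [MeasurableSpace α] {μ ν : Measure α}
    (h_univ : μ Set.univ = ν Set.univ) :
    klDiv μ ν = InformationTheory.klDiv μ ν := by
  by_cases h : μ ≪ ν ∧ Integrable (llr μ ν) μ
  · rw [klDiv, if_pos h, InformationTheory.klDiv_of_ac_of_integrable h.1 h.2, measureReal_def,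
      measureReal_def, h_univ, add_sub_cancel_right]
  · rw [klDiv, if_neg h, eq_comm, InformationTheory.klDiv_eq_top_iff]
    exact fun hμν h_int ↦ h ⟨hμν, h_int⟩

lemma InformationTheory.klDiv_compProd_left_lt_of_not_ae_eq {α β : Type*} [MeasurableSpace α]
    [MeasurableSpace β] [MeasurableSpace.CountableOrCountablyGenerated α β]
    {μ ν : Measure α} [IsFiniteMeasure μ] [IsFiniteMeasure ν]
    {κ η : Kernel α β} [IsMarkovKernel κ] [IsMarkovKernel η]
    (h_fin : InformationTheory.klDiv (μ ⊗ₘ κ) (ν ⊗ₘ η) ≠ ∞) (h_ne : ¬ κ =ᵐ[μ] η) :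
    InformationTheory.klDiv (μ ⊗ₘ η) (ν ⊗ₘ η) < InformationTheory.klDiv (μ ⊗ₘ κ) (ν ⊗ₘ η) := by
  rw [klDiv_compProd_left, klDiv_compProd_eq_add μ ν κ η]
  rw [klDiv_compProd_eq_add] at h_fin
  refine ENNReal.lt_add_right (ENNReal.add_ne_top.mp h_fin).1 ?_
  rwa [Ne, klDiv_eq_zero_iff, Kernel.compProd_eq_iff]

theorem klDiv_compProd_true_kernel_lt_general {α β : Type*}
    [MeasurableSpace α] [MeasurableSpace β] [StandardBorelSpace β]
    (ρ σ : Measure α) [IsProbabilityMeasure ρ] [IsProbabilityMeasure σ]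
    (η κ : Kernel α β) [IsMarkovKernel η] [IsMarkovKernel κ]
    (h_fin : klDiv (ρ ⊗ₘ κ) (σ ⊗ₘ η) < ∞)
    (h_ne : ¬ ∀ᵐ x ∂ρ, κ x = η x) :
    klDiv (ρ ⊗ₘ η) (σ ⊗ₘ η) < klDiv (ρ ⊗ₘ κ) (σ ⊗ₘ η) := by
  have h_univ (τ : Kernel α β) [IsMarkovKernel τ] : (ρ ⊗ₘ τ) Set.univ = (σ ⊗ₘ η) Set.univ := by
    simp
  rw [klDiv_eq_informationTheory_klDiv (h_univ κ)] at h_fin ⊢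
  rw [klDiv_eq_informationTheory_klDiv (h_univ η)]
  exact InformationTheory.klDiv_compProd_left_lt_of_not_ae_eq h_fin.ne h_ne

theorem klDiv_compProd_true_kernel_lt {α β : Type*}
    [MeasurableSpace α] [StandardBorelSpace α] [MeasurableSpace β] [StandardBorelSpace β]
    (ρ σ : Measure α) [IsProbabilityMeasure ρ] [IsProbabilityMeasure σ]
    (η κ : Kernel α β) [IsMarkovKernel η] [IsMarkovKernel κ]
    (h_fin : klDiv (ρ ⊗ₘ κ) (σ ⊗ₘ η) < ∞)
    (h_ne : ¬ ∀ᵐ x ∂ρ, κ x = η x) :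
    klDiv (ρ ⊗ₘ η) (σ ⊗ₘ η) < klDiv (ρ ⊗ₘ κ) (σ ⊗ₘ η) :=
  klDiv_compProd_true_kernel_lt_general ρ σ η κ h_fin h_ne
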